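/- There exists a consistent case law database DB, a case description CaseDesc, and a court crt, together with a set F of formulas, such that every f ∈ F is individually permitted in DB under CaseDesc and crt, but the set F is not permitted. (Concretely, with two same-level courts H¹₁, H¹₂ below a court H², and DB containing cases deciding p at H¹₁ and ¬p at H¹₂, the set F = {p, ¬p} is not permitted at crt = H² although each element is.) -/

import Mathlib

/- PriCL: a formalization of the privacy case-law framework.
   The underlying logic is taken semantically: a formula is a predicate on
   possible worlds `W`; entailment, ⊤, ⊥, ∧, ∨, ¬ are the semantic ones,
   which satisfy all requirements of the framework (monotone entailment etc.). -/

open Classical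
noncomputable section

namespace PriCL

/-- Formulas of the underlying logic (semantic view). -/
abbrev Form (W : Type) := W → Prop

namespace Form
variable {W : Type}
/-- Entailment `A ⊨ B`. -/
def ent (A B : Form W) : Prop := ∀ w, A w → B w
def top : Form W := fun _ => True
def bot : Form W := fun _ => False
def and (A B : Form W) : Form W := fun w => A w ∧ B w
def or (A B : Form W) : Form W := fun w => A w ∨ B w
def not (A : Form W) : Form W := fun w => ¬ A w
def imp (A B : Form W) : Form W := fun w => A w → B w
end Form

/-- Conjunction of a finite list of formulas. -/
def conjList {W : Type} (l : List (Form W)) : Form W := l.foldr Form.and Form.top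

/-- Labels of proof-tree leaves: axiom, assessment, or reference to a case id. -/
inductive Lab (CI : Type) where
  | ax : Lab CI
  | assess : Lab CI
  | ref : CI → Lab CI

/-- Proof trees: leaves carry a prerequisite `pre` and a `fact`, inner nodes
    carry a formula and are AND- or OR-steps over finitely many children. -/
inductive PTree (W CI : Type) where
  | leaf (pre fact : Form W) (lab : Lab CI)
  | node (f : Form W) (isAnd : Bool) (n : ℕ) (children : Fin n → PTree W CI)

namespace PTree
variable {W CI : Type}

/-- The formula at the root of the tree (for a leaf, its fact). -/
def rootF : PTree W CI → Form W
  | leaf _ fact _ => fact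
  | node f _ _ _ => f

/-- Prerequisites: AND-nodes conjoin, OR-nodes disjoin children prerequisites. -/
def pres : PTree W CI → Form W
  | leaf pre _ _ => pre
  | node _ true _ c => fun w => ∀ i, (pres (c i)) w
  | node _ false _ c => fun w => ∃ i, (pres (c i)) w

/-- Facts, combined analogously to prerequisites. -/
def facts : PTree W CI → Form W
  | leaf _ fact _ => fact
  | node _ true _ c => fun w => ∀ i, (facts (c i)) w
  | node _ false _ c => fun w => ∃ i, (facts (c i)) w

/-- Condition (iv) of case consistency: each inner node is entailed by the
    conjunction (AND) resp. disjunction (OR) of its children. -/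
def stepsOk : PTree W CI → Prop
  | leaf _ _ _ => True
  | node f true _ c =>
      Form.ent (fun w => ∀ i, rootF (c i) w) f ∧ ∀ i, stepsOk (c i)
  | node f false _ c =>
      Form.ent (fun w => ∃ i, rootF (c i) w) f ∧ ∀ i, stepsOk (c i)

/-- For Axiom leaves we require `pre = fact`. -/
def axOk : PTree W CI → Prop
  | leaf pre fact Lab.ax => pre = fact
  | leaf _ _ _ => True
  | node _ _ _ c => ∀ i, axOk (c i)

/-- The tree contains no Assess-labeled node. -/
def assessFree : PTree W CI → Prop
  | leaf _ _ Lab.assess => False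
  | leaf _ _ _ => True
  | node _ _ _ c => ∀ i, assessFree (c i)

/-- The set of leaves (as pre/fact/label triples). -/
def leaves : PTree W CI → Set (Form W × Form W × Lab CI)
  | leaf pre fact lab => {(pre, fact, lab)}
  | node _ _ _ c => { x | ∃ i, x ∈ leaves (c i) }

/-- The list of leaves, in left-to-right order. -/
def leavesList : PTree W CI → List (Form W × Form W × Lab CI)
  | leaf pre fact lab => [(pre, fact, lab)]
  | node _ _ _ c => (List.ofFn fun i => leavesList (c i)).flatten

/-- All subtrees (= nodes, identified with the subtree rooted there). -/
def subtrees : PTree W CI → Set (PTree W CI)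
  | leaf pre fact lab => {leaf pre fact lab}
  | node f b n c => insert (node f b n c) { t | ∃ i, t ∈ subtrees (c i) }

/-- Replace the precondition of every node in `N` by ⊥ (used for warranting). -/
def blockTree (N : Set (PTree W CI)) : PTree W CI → PTree W CI
  | leaf pre fact lab =>
      if leaf pre fact lab ∈ N then leaf Form.bot fact lab else leaf pre fact lab
  | node f b n c => node f b n (fun i => blockTree N (c i))

end PTree

/-- A case: decision formula, case description, proof tree, and court. -/
structure Case (W CI Court : Type) where
  df : Form W
  desc : Form W
  tree : PTree W CI
  crt : Court

namespace Case
variable {W CI Court : Type}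
def presC (C : Case W CI Court) : Form W := C.tree.pres
def factsC (C : Case W CI Court) : Form W := C.tree.facts
/-- Structural well-formedness: the root carries the decision formula, and
    Axiom leaves have `pre = fact`. -/
def wf (C : Case W CI Court) : Prop := C.tree.rootF = C.df ∧ C.tree.axOk
end Case

/-- Case consistency (Definition "Case Consistency"). -/
def consistentCase {W CI Court : Type} (KB : Form W) (C : Case W CI Court) : Prop :=
  C.wf ∧
  ¬ Form.ent (KB.and C.desc) Form.bot ∧
  Form.ent (KB.and C.desc) C.presC ∧
  ¬ Form.ent ((KB.and C.desc).and C.factsC) Form.bot ∧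
  C.tree.stepsOk

/-- A case law database: world knowledge, the cases in temporal order (the
    list order is the time order ≤ₜ), case identifiers `mu`, court-dependent
    must-agree / may-ref relations, and time-indexed unwarranted nodes `U`. -/
structure CLD (W CI Court : Type) where
  KB : Form W
  cases : List (Case W CI Court)
  mu : ℕ → CI
  mustAgree : Court → Court → Prop
  mayRef : Court → Court → Prop
  U : ℕ → Set (PTree W CI)

namespace CLD
variable {W CI Court : Type}

/-- All unwarranted nodes of the database. -/
def Uall (DB : CLD W CI Court) : Set (PTree W CI) := ⋃ j < DB.cases.length, DB.U j

/-- Warranted (sub)case w.r.t. a set `N` of unwarranted nodes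
    (Definition "Warranted Subcase"). -/
def warrantedCase (DB : CLD W CI Court) (N : Set (PTree W CI)) (C : Case W CI Court) : Prop :=
  consistentCase DB.KB { C with tree := PTree.blockTree N C.tree }

/-- Structural requirements: injective identifiers, must-agree ⊆ may-ref,
    and monotonicity of the unwarranted sets along the timeline. -/
def wfStruct (DB : CLD W CI Court) : Prop :=
  (∀ i j, i < DB.cases.length → j < DB.cases.length → DB.mu i = DB.mu j → i = j) ∧
  (∀ c1 c2, DB.mustAgree c1 c2 → DB.mayRef c1 c2) ∧
  (∀ i j, i ≤ j → DB.U i ⊆ DB.U j)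

def casewiseConsistent (DB : CLD W CI Court) : Prop :=
  ∀ C ∈ DB.cases, consistentCase DB.KB C

/-- Correct referencing of the case `C` sitting at time index `jC`
    (Definition "Correct Case Reference"): each Ref-leaf points to a strictly
    earlier case containing a warranted subcase deciding the fact, may-ref
    holds, and KB ∧ pre entails the referenced prerequisites. -/
def refConsistentAt (DB : CLD W CI Court) (jC : ℕ) (C : Case W CI Court) : Prop :=
  ∀ pre fact id, (pre, fact, Lab.ref id) ∈ C.tree.leaves →
    ∃ jD, jD < jC ∧ ∃ hD : jD < DB.cases.length, DB.mu jD = id ∧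
      ∃ s ∈ (DB.cases.get ⟨jD, hD⟩).tree.subtrees,
        s.rootF = fact ∧
        DB.warrantedCase (DB.U jC)
          ⟨fact, (DB.cases.get ⟨jD, hD⟩).desc, s, (DB.cases.get ⟨jD, hD⟩).crt⟩ ∧
        DB.mayRef C.crt (DB.cases.get ⟨jD, hD⟩).crt ∧
        Form.ent (DB.KB.and pre) s.pres

def refConsistent (DB : CLD W CI Court) : Prop :=
  ∀ j, ∀ h : j < DB.cases.length, DB.refConsistentAt j (DB.cases.get ⟨j, h⟩)

/-- Case conflict (Definition "Case Conflict"): `C2` is warranted w.r.t. `N`,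
    the prerequisites are compatible, the facts contradict, and must-agree
    holds between the courts. -/
def conflict (DB : CLD W CI Court) (N : Set (PTree W CI)) (C1 C2 : Case W CI Court) : Prop :=
  DB.warrantedCase N C2 ∧
  ¬ Form.ent ((DB.KB.and C1.presC).and C2.presC) Form.bot ∧
  Form.ent ((DB.KB.and C1.factsC).and C2.factsC) Form.bot ∧
  DB.mustAgree C1.crt C2.crt

def hierConsistent (DB : CLD W CI Court) : Prop :=
  ∀ j, ∀ h : j < DB.cases.length, ∀ D ∈ DB.cases,
    ¬ DB.conflict (DB.U j) (DB.cases.get ⟨j, h⟩) D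

/-- Consistent warranting: `U` contains every Ref node whose referenced
    subcase is unwarranted. -/
def warrantsConsistently (DB : CLD W CI Court) : Prop :=
  ∀ j, j < DB.cases.length →
  ∀ C ∈ DB.cases, ∀ pre fact id, (pre, fact, Lab.ref id) ∈ C.tree.leaves →
    (∀ jD, ∀ hD : jD < DB.cases.length, DB.mu jD = id →
      ∀ s ∈ (DB.cases.get ⟨jD, hD⟩).tree.subtrees, s.rootF = fact →
        ¬ DB.warrantedCase (DB.U j)
            ⟨fact, (DB.cases.get ⟨jD, hD⟩).desc, s, (DB.cases.get ⟨jD, hD⟩).crt⟩) →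
    PTree.leaf pre fact (Lab.ref id) ∈ DB.U j

/-- Database consistency. -/
def consistent (DB : CLD W CI Court) : Prop :=
  DB.wfStruct ∧ DB.casewiseConsistent ∧ DB.refConsistent ∧
  DB.hierConsistent ∧ DB.warrantsConsistently

/-- Append a new case at the end of the timeline, with a fresh identifier. -/
def snoc (DB : CLD W CI Court) (C : Case W CI Court) (id : CI) : CLD W CI Court :=
  { DB with cases := DB.cases ++ [C],
            mu := fun j => if j = DB.cases.length then id else DB.mu j }

/-- Append several new cases at the end of the timeline. -/
def appendCases (DB : CLD W CI Court) (Cs : List (Case W CI Court)) (ids : ℕ → CI) :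
    CLD W CI Court :=
  { DB with cases := DB.cases ++ Cs,
            mu := fun j => if j < DB.cases.length then DB.mu j else ids (j - DB.cases.length) }

/-- `f` is permitted in `DB` under circumstances `cd` and court `crt`. -/
def permitted (DB : CLD W CI Court) (f cd : Form W) (crt : Court) : Prop :=
  ∃ (C : Case W CI Court) (id : CI),
    C.df = f ∧ C.desc = cd ∧ C.crt = crt ∧ C.tree.assessFree ∧
    (DB.snoc C id).consistent

/-- A finite set (list) `fs` of formulas is permitted: Assess-free cases deciding
    the formulas of `fs` can be inserted, in some order, at the end of the
    timeline, preserving consistency. -/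
def permittedList (DB : CLD W CI Court) (fs : List (Form W)) (cd : Form W) (crt : Court) : Prop :=
  ∃ (Cs : List (Case W CI Court)) (ids : ℕ → CI),
    (Cs.map Case.df).Perm fs ∧
    (∀ C ∈ Cs, C.desc = cd ∧ C.crt = crt ∧ C.tree.assessFree) ∧
    (DB.appendCases Cs ids).consistent

/-- `(pre, fact)` is an Assess-labeled leaf of some case of `DB`. -/
def assessLeaf (DB : CLD W CI Court) (pre fact : Form W) : Prop :=
  ∃ C ∈ DB.cases, (pre, fact, (Lab.assess : Lab CI)) ∈ C.tree.leaves

/-- `A` is a supporting set for `f` under circumstances `cd`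
    (Definition "Supporting set", conditions (1)–(3)). -/
def supports (DB : CLD W CI Court) (cd f : Form W) (A : List (Form W × Form W)) : Prop :=
  (∀ a ∈ A, DB.assessLeaf a.1 a.2) ∧
  Form.ent (DB.KB.and cd) (conjList (A.map Prod.fst)) ∧
  Form.ent ((DB.KB.and cd).and (conjList (A.map Prod.snd))) f ∧
  ¬ Form.ent ((DB.KB.and cd).and (conjList (A.map Prod.snd))) Form.bot

/-- The supporting set is warranted: none of its nodes is unwarranted
    w.r.t. any case of the database. -/
def warrantedSupp (DB : CLD W CI Court) (A : List (Form W × Form W)) : Prop :=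
  ∀ a ∈ A, ∀ j, j < DB.cases.length →
    PTree.leaf a.1 a.2 (Lab.assess : Lab CI) ∉ DB.U j

/-- The trivial proof tree with root ⊤ and one Ref-leaf per element of `A`. -/
def trivialTree (A : List (Form W × Form W)) (ids : ℕ → CI) : PTree W CI :=
  PTree.node Form.top true A.length
    (fun i => PTree.leaf (A.get ⟨i, i.isLt⟩).1 (A.get ⟨i, i.isLt⟩).2 (Lab.ref (ids i)))

/-- The supporting set `A` is consistent with `DB`: adding the trivial case
    referencing all its elements yields a consistent database. -/
def consistentWith (DB : CLD W CI Court) (cd : Form W) (crt : Court)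
    (A : List (Form W × Form W)) : Prop :=
  ∃ (ids : ℕ → CI) (fid : CI),
    (DB.snoc ⟨Form.top, cd, trivialTree A ids, crt⟩ fid).consistent

/-- Replace the case at time index `j`. -/
def replace (DB : CLD W CI Court) (j : ℕ) (C' : Case W CI Court) : CLD W CI Court :=
  { DB with cases := DB.cases.set j C' }

end CLD

end PriCL

/-!
Two incomparable lower courts have decided `p` and `¬p`. A higher court, bound only by its own
decisions, may decide either formula by referring to the matching lower decision, so each of
`p`, `¬p` is permitted there. Deciding both, however, puts two cases at that court whose
prerequisites are compatible (both follow from the common case description) and whose facts are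
contradictory (the facts of a consistent case entail its decision): a conflict.
-/

namespace PriCL

section General

variable {W CI Court : Type}

@[simp]
theorem PTree.blockTree_empty (t : PTree W CI) : t.blockTree ∅ = t := by
  induction t with
  | leaf => simp [PTree.blockTree]
  | node f b n c ih => simp only [PTree.blockTree, ih]

theorem PTree.mem_subtrees_self (t : PTree W CI) : t ∈ t.subtrees := by
  cases t <;> simp [PTree.subtrees]

theorem PTree.facts_ent_rootF {t : PTree W CI} (h : t.stepsOk) : Form.ent t.facts t.rootF := by
  induction t with
  | leaf => exact fun _ hw => hw
  | node f b n c ih =>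
    cases b with
    | true => exact fun w hw => h.1 w fun i => ih i (h.2 i) w (hw i)
    | false => exact fun w ⟨i, hi⟩ => h.1 w ⟨i, ih i (h.2 i) w hi⟩

theorem consistentCase.factsC_ent_df {KB : Form W} {C : Case W CI Court}
    (h : consistentCase KB C) : Form.ent C.factsC C.df :=
  h.1.1 ▸ PTree.facts_ent_rootF h.2.2.2.2

theorem consistentCase.not_ent_factsC_self {KB : Form W} {C : Case W CI Court}
    (h : consistentCase KB C) : ¬ Form.ent ((KB.and C.factsC).and C.factsC) Form.bot :=
  fun hbot => h.2.2.2.1 fun w ⟨⟨hKB, _⟩, hf⟩ => hbot w ⟨⟨hKB, hf⟩, hf⟩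

theorem consistentCase_leaf {KB cd f : Form W} {lab : Lab CI} {crt : Court}
    (hax : (PTree.leaf Form.top f lab).axOk) {w : W} (hw : KB w ∧ cd w ∧ f w) :
    consistentCase KB ⟨f, cd, PTree.leaf Form.top f lab, crt⟩ :=
  ⟨⟨rfl, hax⟩, fun h => h w ⟨hw.1, hw.2.1⟩, fun _ _ => trivial,
    fun h => h w ⟨⟨hw.1, hw.2.1⟩, hw.2.2⟩, trivial⟩

namespace CLD

variable {DB : CLD W CI Court}

@[simp]
theorem warrantedCase_empty {C : Case W CI Court} :
    DB.warrantedCase ∅ C ↔ consistentCase DB.KB C := by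
  simp [warrantedCase]

theorem conflict_empty_of_contradictory_df {C D : Case W CI Court}
    (hC : consistentCase DB.KB C) (hD : consistentCase DB.KB D) (hdesc : C.desc = D.desc)
    (hdf : Form.ent ((DB.KB.and C.df).and D.df) Form.bot) (hagree : DB.mustAgree C.crt D.crt) :
    DB.conflict ∅ C D := by
  refine ⟨warrantedCase_empty.2 hD, ?_, ?_, hagree⟩
  · -- both prerequisites follow from the satisfiable `KB ∧ desc`
    intro hbot
    exact hD.2.1 fun w hw =>
      hbot w ⟨⟨hw.1, hC.2.2.1 w ⟨hw.1, hdesc ▸ hw.2⟩⟩, hD.2.2.1 w hw⟩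
  · exact fun w ⟨⟨hKB, hfC⟩, hfD⟩ =>
      hdf w ⟨⟨hKB, hC.factsC_ent_df w hfC⟩, hD.factsC_ent_df w hfD⟩

theorem hierConsistent_of_mustAgree_imp_eq (hcons : DB.casewiseConsistent)
    (h : ∀ C ∈ DB.cases, ∀ D ∈ DB.cases, DB.mustAgree C.crt D.crt → C = D) :
    DB.hierConsistent := by
  intro j hj D hD hconf
  have hC := List.get_mem DB.cases ⟨j, hj⟩
  obtain rfl := h _ hC D hD hconf.2.2.2
  exact (hcons _ hC).not_ent_factsC_self hconf.2.2.1

theorem not_permittedList_of_contradictory {fs : List (Form W)} {f g cd : Form W} {crt : Court}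
    (hU : ∀ j, DB.U j = ∅) (hagree : DB.mustAgree crt crt) (hf : f ∈ fs) (hg : g ∈ fs)
    (hfg : Form.ent ((DB.KB.and f).and g) Form.bot) :
    ¬ DB.permittedList fs cd crt := by
  rintro ⟨Cs, ids, hperm, hCs, hcons⟩
  obtain ⟨C, hC, rfl⟩ := List.mem_map.1 (hperm.mem_iff.2 hf)
  obtain ⟨D, hD, rfl⟩ := List.mem_map.1 (hperm.mem_iff.2 hg)
  have hCmem : C ∈ (DB.appendCases Cs ids).cases := List.mem_append_right _ hC
  have hDmem : D ∈ (DB.appendCases Cs ids).cases := List.mem_append_right _ hD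
  obtain ⟨j, rfl⟩ := List.mem_iff_get.1 hCmem
  obtain ⟨hdescC, hcrtC, -⟩ := hCs _ hC
  obtain ⟨hdescD, hcrtD, -⟩ := hCs D hD
  refine hcons.2.2.2.1 j j.2 D hDmem ?_
  rw [show (DB.appendCases Cs ids).U j = ∅ from hU j]
  exact conflict_empty_of_contradictory_df (hcons.2.1 _ hCmem) (hcons.2.1 D hDmem)
    (hdescC.trans hdescD.symm) hfg (hcrtC ▸ hcrtD ▸ hagree)

end CLD

end General

section Example

def p : Form Bool := fun w => w = true

theorem p_true : p true := rfl

theorem not_p_false : Form.not p false := Bool.false_ne_true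

def lowerCase (f : Form Bool) (c : Fin 3) : Case Bool ℕ (Fin 3) :=
  ⟨f, Form.top, .leaf Form.top f .assess, c⟩

def referringCase (f : Form Bool) (k : ℕ) : Case Bool ℕ (Fin 3) :=
  ⟨f, Form.top, .leaf Form.top f (.ref k), 2⟩

/-- Courts `0` and `1` split on `p`; court `2`, above both, is bound only by its own decisions. -/
def splitDB : CLD Bool ℕ (Fin 3) where
  KB := Form.top
  cases := [lowerCase p 0, lowerCase (Form.not p) 1]
  mu := id
  mustAgree := Eq
  mayRef _ _ := True
  U _ := ∅

theorem consistentCase_lowerCase {f : Form Bool} {w : Bool} (hf : f w) (c : Fin 3) :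
    consistentCase Form.top (lowerCase f c) :=
  consistentCase_leaf trivial (w := w) ⟨trivial, trivial, hf⟩

theorem consistentCase_referringCase {f : Form Bool} {w : Bool} (hf : f w) (k : ℕ) :
    consistentCase Form.top (referringCase f k) :=
  consistentCase_leaf trivial (w := w) ⟨trivial, trivial, hf⟩

theorem ref_not_mem_leaves_lowerCase {f pre fact : Form Bool} {c : Fin 3} {id : ℕ} :
    (pre, fact, Lab.ref id) ∉ (lowerCase f c).tree.leaves := by
  simp [lowerCase, PTree.leaves]

theorem splitDB_consistent : splitDB.consistent := by
  have hcases : ∀ C ∈ splitDB.cases, C = lowerCase p 0 ∨ C = lowerCase (Form.not p) 1 := by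
    simp [splitDB]
  have hcons : splitDB.casewiseConsistent := by
    intro C hC
    rcases hcases C hC with rfl | rfl
    exacts [consistentCase_lowerCase p_true 0, consistentCase_lowerCase not_p_false 1]
  refine ⟨⟨fun _ _ _ _ => id, fun _ _ _ => trivial, fun _ _ _ => le_rfl⟩, hcons, ?_, ?_, ?_⟩
  · intro j hj pre fact id hleaf
    rcases hcases _ (List.get_mem _ _) with h | h <;> rw [h] at hleaf <;>
      exact absurd hleaf ref_not_mem_leaves_lowerCase
  · refine CLD.hierConsistent_of_mustAgree_imp_eq hcons
      fun C hC D hD (hcrt : C.crt = D.crt) => ?_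
    rcases hcases C hC with rfl | rfl <;> rcases hcases D hD with rfl | rfl <;>
      first | rfl | simp [lowerCase] at hcrt
  · intro _ _ C hC pre fact id hleaf
    rcases hcases C hC with rfl | rfl <;> exact absurd hleaf ref_not_mem_leaves_lowerCase

theorem splitDB_snoc_mu (C : Case Bool ℕ (Fin 3)) (j : ℕ) : (splitDB.snoc C 2).mu j = j := by
  by_cases h : j = 2 <;> simp [CLD.snoc, splitDB, h]

section Snoc

variable {f : Form Bool} {k : ℕ}

theorem mem_splitDB_snoc_referringCase {C : Case Bool ℕ (Fin 3)} :
    C ∈ (splitDB.snoc (referringCase f k) 2).cases ↔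
      C = lowerCase p 0 ∨ C = lowerCase (Form.not p) 1 ∨ C = referringCase f k := by
  simp [CLD.snoc, splitDB]

theorem eq_of_ref_mem_leaves_splitDB_snoc {C : Case Bool ℕ (Fin 3)} {pre fact : Form Bool}
    {id : ℕ} (hC : C ∈ (splitDB.snoc (referringCase f k) 2).cases)
    (hl : (pre, fact, Lab.ref id) ∈ C.tree.leaves) :
    C = referringCase f k ∧ pre = Form.top ∧ fact = f ∧ id = k := by
  rcases mem_splitDB_snoc_referringCase.1 hC with rfl | rfl | rfl
  · exact absurd hl ref_not_mem_leaves_lowerCase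
  · exact absurd hl ref_not_mem_leaves_lowerCase
  · simpa [referringCase, PTree.leaves] using hl

variable {c : Fin 3} {w : Bool}

theorem refConsistentAt_splitDB_snoc (hf : f w) (hk : splitDB.cases[k]? = some (lowerCase f c)) :
    (splitDB.snoc (referringCase f k) 2).refConsistentAt 2 (referringCase f k) := by
  obtain ⟨hk2, hget⟩ := List.getElem?_eq_some_iff.1 hk
  intro pre fact id hl
  obtain ⟨-, hfact, hid⟩ : pre = Form.top ∧ fact = f ∧ id = k := by
    simpa [referringCase, PTree.leaves] using hl
  subst fact id
  have hkD : k < (splitDB.snoc (referringCase f k) 2).cases.length := by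
    simp [CLD.snoc]; omega
  have htarget : (splitDB.snoc (referringCase f k) 2).cases.get ⟨k, hkD⟩ = lowerCase f c := by
    simpa [CLD.snoc, List.getElem_append_left hk2] using hget
  refine ⟨k, hk2, hkD, splitDB_snoc_mu _ k, ?_⟩
  rw [htarget]
  exact ⟨_, PTree.mem_subtrees_self _, rfl,
    CLD.warrantedCase_empty.2 (consistentCase_lowerCase hf c), trivial, fun _ _ => trivial⟩

theorem splitDB_snoc_referringCase_consistent (hf : f w)
    (hk : splitDB.cases[k]? = some (lowerCase f c)) :
    (splitDB.snoc (referringCase f k) 2).consistent := by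
  have hcons : (splitDB.snoc (referringCase f k) 2).casewiseConsistent := by
    intro C hC
    rcases mem_splitDB_snoc_referringCase.1 hC with rfl | rfl | rfl
    exacts [consistentCase_lowerCase p_true 0, consistentCase_lowerCase not_p_false 1,
      consistentCase_referringCase hf k]
  have hrefOk := refConsistentAt_splitDB_snoc hf hk
  refine ⟨⟨fun i j _ _ h => by rwa [splitDB_snoc_mu, splitDB_snoc_mu] at h,
    fun _ _ _ => trivial, fun _ _ _ => le_rfl⟩, hcons, ?_, ?_, ?_⟩
  · intro j hj
    have hj3 : j < 3 := hj
    interval_cases j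
    · exact fun _ _ _ hl => absurd hl ref_not_mem_leaves_lowerCase
    · exact fun _ _ _ hl => absurd hl ref_not_mem_leaves_lowerCase
    · exact hrefOk
  · refine CLD.hierConsistent_of_mustAgree_imp_eq hcons
      fun C hC D hD (hcrt : C.crt = D.crt) => ?_
    rcases mem_splitDB_snoc_referringCase.1 hC with rfl | rfl | rfl <;>
      rcases mem_splitDB_snoc_referringCase.1 hD with rfl | rfl | rfl <;>
      first | rfl | simp [lowerCase, referringCase] at hcrt
  · intro j _ C hC pre fact id hl hunwarranted
    obtain ⟨rfl, rfl, rfl, rfl⟩ := eq_of_ref_mem_leaves_splitDB_snoc hC hl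
    obtain ⟨jD, -, hD, hmuD, s, hs, hroot, hw, -⟩ := hrefOk _ _ _ hl
    exact absurd hw (hunwarranted jD hD hmuD s hs hroot)

end Snoc

end Example

/-- there are a consistent database, circumstances and court, and
    a set (list) F of formulas such that each member of F is individually
    permitted but F itself is not permitted. -/
theorem exists_memberwise_permitted_not_set_permitted :
    ∃ (W CI Court : Type) (DB : CLD W CI Court) (cd : Form W) (crt : Court)
      (F : List (Form W)),
      DB.consistent ∧
      (∀ f ∈ F, DB.permitted f cd crt) ∧
      ¬ DB.permittedList F cd crt := by
  refine ⟨Bool, ℕ, Fin 3, splitDB, Form.top, 2, [p, Form.not p], splitDB_consistent, ?_, ?_⟩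
  · rintro f (_ | ⟨_, _ | ⟨_, ⟨⟩⟩⟩)
    · exact ⟨referringCase p 0, 2, rfl, rfl, rfl, trivial,
        splitDB_snoc_referringCase_consistent p_true rfl⟩
    · exact ⟨referringCase (Form.not p) 1, 2, rfl, rfl, rfl, trivial,
        splitDB_snoc_referringCase_consistent not_p_false rfl⟩
  · exact CLD.not_permittedList_of_contradictory (f := p) (g := Form.not p) (fun _ => rfl) rfl
      (by simp) (by simp) fun _ ⟨⟨_, hp⟩, hnp⟩ => hnp hp

end PriCL
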